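/- arXiv:1803.11473 — 2 statements merged into one kernel-verified Lean document; each statement's English description precedes it below -/
import Mathlib

section
/- The number of labeled rooted forests on n vertices with exactly k roots is C(n−1, k−1) · n^{n−k}. -/
/-- A parent map `f : [n] → [n] ∪ {none}` encodes a labeled rooted forest on `n`
vertices iff it has no cycles, i.e. admits a height function decreasing along edges. -/
def IsForest (n : ℕ) (f : Fin n → Option (Fin n)) : Prop :=
  ∃ h : Fin n → ℕ, ∀ i j : Fin n, f i = some j → h j < h i

/-- The roots of the forest encoded by the parent map `f`. -/
def forestRoots (n : ℕ) (f : Fin n → Option (Fin n)) : Finset (Fin n) :=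
  Finset.univ.filter fun i => f i = none

set_option linter.unusedSectionVars false
set_option linter.unusedTactic false

def Acyc {V M : Type} (f : V → V ⊕ M) : Prop :=
  ∃ h : V → ℕ, ∀ i j, f i = Sum.inl j → h j < h i

variable {V M : Type} [Fintype V] [DecidableEq V]

def rset (f : V → V ⊕ M) : Finset V := Finset.univ.filter fun i => (f i).isRight

lemma mem_rset {f : V → V ⊕ M} {i : V} : i ∈ rset f ↔ (f i).isRight := by
  simp [rset]

lemma nosink [Nonempty V] {f : V → V ⊕ M} (hf : Acyc f) : ∃ i, (f i).isRight := by
  obtain ⟨h, hh⟩ := hf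
  obtain ⟨i, -, hi⟩ := Finset.exists_min_image Finset.univ h ⟨Classical.arbitrary V, Finset.mem_univ _⟩
  refine ⟨i, ?_⟩
  cases hfi : f i with
  | inl j => exact absurd (hh i j hfi) (not_lt.2 (hi j (Finset.mem_univ _)))
  | inr m => rfl

def mkF (S : Finset V) (g : ↥S → M) (f₂ : ↥(Sᶜ) → ↥(Sᶜ) ⊕ ↥S) : V → V ⊕ M :=
  fun i => if hi : i ∈ S then Sum.inr (g ⟨i, hi⟩)
    else Sum.elim (fun j : ↥(Sᶜ) => (Sum.inl (j : V) : V ⊕ M)) (fun j : ↥S => (Sum.inl (j : V) : V ⊕ M))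
      (f₂ ⟨i, Finset.mem_compl.2 hi⟩)

lemma rset_mkF (S : Finset V) (g : ↥S → M) (f₂ : ↥(Sᶜ) → ↥(Sᶜ) ⊕ ↥S) :
    rset (mkF S g f₂) = S := by
  ext i
  rw [mem_rset, mkF]
  by_cases hi : i ∈ S
  · simp [hi]
  · simp only [dif_neg hi]
    cases f₂ ⟨i, Finset.mem_compl.2 hi⟩ <;> simp [hi]

lemma acyc_mkF (S : Finset V) (g : ↥S → M) (f₂ : ↥(Sᶜ) → ↥(Sᶜ) ⊕ ↥S)
    (hf₂ : Acyc f₂) : Acyc (mkF S g f₂) := by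
  obtain ⟨h₂, hh₂⟩ := hf₂
  refine ⟨fun i => if hi : i ∈ S then 0 else h₂ ⟨i, Finset.mem_compl.2 hi⟩ + 1, ?_⟩
  intro i j hij
  rw [mkF] at hij
  by_cases hi : i ∈ S
  · simp [hi] at hij
  · rw [dif_neg hi] at hij
    dsimp only
    rw [dif_neg hi]
    cases hx : f₂ ⟨i, Finset.mem_compl.2 hi⟩ with
    | inl y =>
      rw [hx] at hij
      simp only [Sum.elim_inl, Sum.inl.injEq] at hij
      subst hij
      have hj : ¬ (y : V) ∈ S := Finset.mem_compl.1 y.2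
      rw [dif_neg hj]
      have := hh₂ _ _ hx
      simpa using Nat.succ_lt_succ this
    | inr y =>
      rw [hx] at hij
      simp only [Sum.elim_inr, Sum.inl.injEq] at hij
      subst hij
      rw [dif_pos y.2]
      exact Nat.succ_pos _

/-- the per-fiber decomposition -/
noncomputable def fiberEquiv (S : Finset V) :
    ((↥S → M) × {f₂ : ↥(Sᶜ) → ↥(Sᶜ) ⊕ ↥S // Acyc f₂}) ≃
      {f : V → V ⊕ M // Acyc f ∧ rset f = S} := by
  refine Equiv.ofBijective
    (fun p => ⟨mkF S p.1 p.2.1, acyc_mkF S p.1 p.2.1 p.2.2, rset_mkF S p.1 p.2.1⟩) ⟨?_, ?_⟩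
  · rintro ⟨g, f₂, hf₂⟩ ⟨g', f₂', hf₂'⟩ hpq
    simp only [Subtype.mk.injEq] at hpq
    have hg : g = g' := by
      funext x
      have := congrFun hpq x.1
      rw [mkF, mkF, dif_pos x.2, dif_pos x.2] at this
      simpa using this
    have hf : f₂ = f₂' := by
      funext x
      have hx : ¬ (x : V) ∈ S := Finset.mem_compl.1 x.2
      have := congrFun hpq x.1
      rw [mkF, mkF, dif_neg hx, dif_neg hx] at this
      cases h1 : f₂ ⟨x.1, Finset.mem_compl.2 hx⟩ <;> cases h2 : f₂' ⟨x.1, Finset.mem_compl.2 hx⟩ <;>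
        rw [h1, h2] at this <;> simp only [Sum.elim_inl, Sum.elim_inr, Sum.inl.injEq] at this <;>
        [skip; skip; skip; skip]
      case inl.inl a b =>
        have hxx : (⟨x.1, Finset.mem_compl.2 hx⟩ : ↥(Sᶜ)) = x := Subtype.ext rfl
        exact congrArg _ (Subtype.ext this)
      case inl.inr a b =>
        have h3 : (b : V) ∉ S := this ▸ Finset.mem_compl.1 a.2
        exact absurd b.2 h3
      case inr.inl a b =>
        have h3 : (b : V) ∈ S := this ▸ a.2
        exact absurd h3 (Finset.mem_compl.1 b.2)
      case inr.inr a b =>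
        have hxx : (⟨x.1, Finset.mem_compl.2 hx⟩ : ↥(Sᶜ)) = x := Subtype.ext rfl
        exact congrArg _ (Subtype.ext this)
    subst hg; subst hf; rfl
  · rintro ⟨f, hf, hrs⟩
    have hR : ∀ i, i ∈ S → (f i).isRight := fun i hi => mem_rset.1 (hrs ▸ hi)
    have hL : ∀ i, i ∉ S → (f i).isLeft := by
      intro i hi
      cases hfi : f i with
      | inl j => rfl
      | inr m => exact absurd (hrs ▸ mem_rset.2 (by rw [hfi]; rfl)) hi
    refine ⟨⟨fun x => (f x.1).getRight (hR x.1 x.2),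
      fun x => if hj : (f x.1).getLeft (hL x.1 (Finset.mem_compl.1 x.2)) ∈ S
        then Sum.inr ⟨_, hj⟩ else Sum.inl ⟨_, Finset.mem_compl.2 hj⟩, ?_⟩, ?_⟩
    · obtain ⟨h, hh⟩ := hf
      refine ⟨fun x => h x.1, ?_⟩
      intro x y hxy
      dsimp only at hxy
      cases hfx : f x.1 with
      | inr m =>
        have := hL x.1 (Finset.mem_compl.1 x.2)
        rw [hfx] at this
        exact absurd this (by simp)
      | inl j =>
        have hj2 : (f x.1).getLeft (hL x.1 (Finset.mem_compl.1 x.2)) = j := by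
          simp [hfx]
        rw [hj2] at hxy
        split at hxy
        · exact absurd hxy (by simp)
        · simp only [Sum.inl.injEq] at hxy
          have hyj : (y : V) = j := by rw [← hxy]
          dsimp only
          rw [hyj]
          exact hh x.1 j hfx
    · apply Subtype.ext
      funext i
      dsimp only
      rw [mkF]
      by_cases hi : i ∈ S
      · rw [dif_pos hi]
        exact (Sum.eq_right_getRight_of_isRight (hR i hi)).symm
      · rw [dif_neg hi]
        have key : ∀ (x : V ⊕ M) (hx : x.isLeft),
            Sum.elim (fun j : ↥(Sᶜ) => (Sum.inl (j : V) : V ⊕ M))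
              (fun j : ↥S => (Sum.inl (j : V) : V ⊕ M))
              (if hj : x.getLeft hx ∈ S then Sum.inr ⟨x.getLeft hx, hj⟩
                else Sum.inl ⟨x.getLeft hx, Finset.mem_compl.2 hj⟩) = x := by
          intro x hx
          cases x with
          | inl j => by_cases hj : j ∈ S <;> simp [hj]
          | inr m => simp at hx
        exact key (f i) (hL i hi)

lemma ident (n m : ℕ) (hn : 1 ≤ n) :
    ∑ s ∈ Finset.range (n + 1), n.choose s *
        (if s = 0 then 0 else if s = n then m ^ s else m ^ s * (s * n ^ (n - s - 1)))
      = m * (n + m) ^ (n - 1) := by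
  rw [Finset.sum_range_succ']
  simp only [if_pos rfl, mul_zero, add_zero]
  have hpt : ∀ t ∈ Finset.range n, n.choose (t + 1) *
      (if t + 1 = 0 then 0 else if t + 1 = n then m ^ (t + 1)
        else m ^ (t + 1) * ((t + 1) * n ^ (n - (t + 1) - 1)))
      = m * (m ^ t * n ^ (n - 1 - t) * (n - 1).choose t) := by
    intro t ht
    rw [Finset.mem_range] at ht
    rw [if_neg (by omega)]
    by_cases htn : t + 1 = n
    · rw [if_pos htn]
      have h1 : n - 1 = t := by omega
      have h2 : n.choose (t + 1) = 1 := by rw [htn]; exact Nat.choose_self n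
      rw [h1, h2, Nat.choose_self, Nat.sub_self, pow_zero, pow_succ]
      ring
    · rw [if_neg htn]
      have hc : n.choose (t + 1) * (t + 1) = n * (n - 1).choose t := by
        have := Nat.add_one_mul_choose_eq (n - 1) t
        rw [Nat.sub_add_cancel hn] at this
        exact this.symm
      have hp : n - 1 - t = (n - (t + 1) - 1) + 1 := by omega
      rw [hp, pow_succ, pow_succ]
      calc n.choose (t + 1) * (m ^ t * m * ((t + 1) * n ^ (n - (t + 1) - 1)))
          = (n.choose (t + 1) * (t + 1)) * (m ^ t * m * n ^ (n - (t + 1) - 1)) := by ring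
        _ = (n * (n - 1).choose t) * (m ^ t * m * n ^ (n - (t + 1) - 1)) := by rw [hc]
        _ = m * (m ^ t * (n ^ (n - (t + 1) - 1) * n) * (n - 1).choose t) := by ring
  rw [Finset.sum_congr rfl hpt, ← Finset.mul_sum]
  have hr : n = (n - 1) + 1 := by omega
  rw [add_comm n m, add_pow m n (n-1), hr]
  rfl

lemma nat_card_sigma {ι : Type} [Fintype ι] (g : ι → Type) [∀ i, Finite (g i)] :
    Nat.card (Σ i, g i) = ∑ i, Nat.card (g i) := by
  letI : ∀ i, Fintype (g i) := fun i => Fintype.ofFinite (g i)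
  simp [Nat.card_eq_fintype_card]

lemma card_acyc : ∀ (n : ℕ) (V M : Type) [Fintype V] [Fintype M] [DecidableEq V],
    Fintype.card V = n →
    Nat.card {f : V → V ⊕ M // Acyc f} =
      if n = 0 then 1 else Fintype.card M * (n + Fintype.card M) ^ (n - 1) := by
  intro n
  induction n using Nat.strong_induction_on with
  | _ n IH =>
  intro V M _ _ _ hV
  rcases Nat.eq_zero_or_pos n with h0 | hpos
  · subst h0
    rw [if_pos rfl]
    haveI : IsEmpty V := Fintype.card_eq_zero_iff.1 hV
    rw [Nat.card_eq_one_iff_unique]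
    refine ⟨⟨fun a b => Subtype.ext (funext fun i => isEmptyElim i)⟩,
      ⟨⟨fun i => isEmptyElim i, ⟨fun _ => 0, fun i => isEmptyElim i⟩⟩⟩⟩
  · rw [if_neg (by omega)]
    haveI : Nonempty V := Fintype.card_pos_iff.1 (by omega)
    set m := Fintype.card M with hm
    have e : {f : V → V ⊕ M // Acyc f} ≃
        Σ S : Finset V, ((↥S → M) × {f₂ : ↥(Sᶜ) → ↥(Sᶜ) ⊕ ↥S // Acyc f₂}) :=
      (Equiv.sigmaFiberEquiv (fun p : {f : V → V ⊕ M // Acyc f} => rset p.1)).symm.trans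
        (Equiv.sigmaCongrRight (fun S =>
          ((Equiv.subtypeSubtypeEquivSubtypeInter _ _).trans (fiberEquiv S).symm)))
    rw [Nat.card_congr e, nat_card_sigma]
    have key : ∀ S : Finset V,
        Nat.card ((↥S → M) × {f₂ : ↥(Sᶜ) → ↥(Sᶜ) ⊕ ↥S // Acyc f₂}) =
          (if S.card = 0 then 0 else if S.card = n then m ^ S.card
            else m ^ S.card * (S.card * n ^ (n - S.card - 1))) := by
      intro S
      have hcS : Fintype.card ↥S = S.card := Fintype.card_coe S
      have hcSc : Fintype.card ↥(Sᶜ) = n - S.card := by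
        rw [Fintype.card_coe, Finset.card_compl, hV]
      have hSle : S.card ≤ n := by rw [← hV]; exact Finset.card_le_univ S
      rw [Nat.card_prod, Nat.card_fun, Nat.card_eq_fintype_card (α := ↥S),
        Nat.card_eq_fintype_card (α := M), hcS, ← hm]
      by_cases hS0 : S.card = 0
      · rw [if_pos hS0]
        haveI : IsEmpty ↥S := by
          rw [← Fintype.card_eq_zero_iff, hcS]; exact hS0
        haveI : Nonempty ↥(Sᶜ) := by
          rw [← Fintype.card_pos_iff, hcSc]; omega
        haveI : IsEmpty {f₂ : ↥(Sᶜ) → ↥(Sᶜ) ⊕ ↥S // Acyc f₂} := by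
          constructor
          rintro ⟨f₂, hf₂⟩
          obtain ⟨i, hi⟩ := nosink hf₂
          cases hfi : f₂ i with
          | inl j => rw [hfi] at hi; simp at hi
          | inr y => exact isEmptyElim y
        rw [Nat.card_of_isEmpty]
        ring
      · rw [if_neg hS0]
        have hlt : n - S.card < n := by omega
        have := IH (n - S.card) hlt (↥(Sᶜ)) (↥S) hcSc
        rw [hcS] at this
        rw [this]
        by_cases hSn : S.card = n
        · rw [if_pos hSn, if_pos (by omega)]
          ring
        · rw [if_neg hSn, if_neg (by omega)]
          have h1 : n - S.card + S.card = n := by omega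
          rw [h1]
    rw [Finset.sum_congr rfl (fun S _ => key S)]
    -- group by cardinality
    have hsum : ∑ S : Finset V,
        (if S.card = 0 then 0 else if S.card = n then m ^ S.card
          else m ^ S.card * (S.card * n ^ (n - S.card - 1)))
        = ∑ s ∈ Finset.range (n + 1), n.choose s *
            (if s = 0 then 0 else if s = n then m ^ s else m ^ s * (s * n ^ (n - s - 1))) := by
      rw [← Finset.powerset_univ, Finset.sum_powerset]
      rw [Finset.card_univ, hV]
      refine Finset.sum_congr rfl fun s hs => ?_
      rw [Finset.sum_congr rfl (fun S hS => ?_), Finset.sum_const,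
        Finset.card_powersetCard, Finset.card_univ, hV, smul_eq_mul]
      rw [(Finset.mem_powersetCard.1 hS).2]
    rw [hsum, ident n m hpos]

lemma mem_forestRoots {n : ℕ} {f₀ : Fin n → Option (Fin n)} {i : Fin n} :
    i ∈ forestRoots n f₀ ↔ f₀ i = none := by
  simp [forestRoots]

def toAcyc (n m : ℕ) (q : Σ p : {f₀ : Fin n → Option (Fin n) // IsForest n f₀},
    (↥(forestRoots n p.1) → Fin m)) (i : Fin n) : Fin n ⊕ Fin m :=
  if hi : q.1.1 i = none then Sum.inr (q.2 ⟨i, mem_forestRoots.2 hi⟩)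
  else Sum.inl ((q.1.1 i).get (Option.ne_none_iff_isSome.1 hi))

lemma acyc_toAcyc (n m : ℕ) (q : Σ p : {f₀ : Fin n → Option (Fin n) // IsForest n f₀},
    (↥(forestRoots n p.1) → Fin m)) : Acyc (toAcyc n m q) := by
  obtain ⟨⟨f₀, h, hh⟩, g⟩ := q
  refine ⟨h, fun i j hij => ?_⟩
  rw [toAcyc] at hij

  by_cases hi : f₀ i = none
  · rw [dif_pos hi] at hij; exact absurd hij (by simp)
  · rw [dif_neg hi] at hij
    simp only [Sum.inl.injEq] at hij
    refine hh i j ?_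
    rw [← hij, Option.some_get]

noncomputable def forestEquiv (n m : ℕ) :
    {f : Fin n → Fin n ⊕ Fin m // Acyc f} ≃
      Σ p : {f₀ : Fin n → Option (Fin n) // IsForest n f₀}, (↥(forestRoots n p.1) → Fin m) := by
  refine (Equiv.ofBijective (fun q => ⟨toAcyc n m q, acyc_toAcyc n m q⟩) ⟨?_, ?_⟩).symm
  · rintro ⟨⟨f₀, hf₀⟩, g⟩ ⟨⟨f₀', hf₀'⟩, g'⟩ hqq
    simp only [Subtype.mk.injEq, toAcyc] at hqq
    have hf : f₀ = f₀' := by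
      funext i
      have := congrFun hqq i
      rw [toAcyc, toAcyc] at this
      by_cases hi : f₀ i = none <;> by_cases hi' : f₀' i = none
      · rw [hi, hi']
      · rw [dif_pos hi, dif_neg hi'] at this; exact absurd this (by simp)
      · rw [dif_neg hi, dif_pos hi'] at this; exact absurd this (by simp)
      · rw [dif_neg hi, dif_neg hi'] at this
        simp only [Sum.inl.injEq] at this
        rw [← Option.some_get (Option.ne_none_iff_isSome.1 hi),
          ← Option.some_get (Option.ne_none_iff_isSome.1 hi'), this]
    subst hf
    have hg : g = g' := by
      funext x
      have hx : f₀ x.1 = none := mem_forestRoots.1 x.2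
      have := congrFun hqq x.1
      rw [toAcyc, toAcyc] at this
      rw [dif_pos hx, dif_pos hx] at this
      simp only [Sum.inr.injEq] at this
      convert this
    subst hg
    rfl
  · rintro ⟨f, hf⟩
    have hL : ∀ i j, (f i).getLeft? = some j ↔ f i = Sum.inl j := by
      intro i j
      cases f i <;> simp
    refine ⟨⟨⟨fun i => (f i).getLeft?, ?_⟩, fun x => (f x.1).getRight ?_⟩, ?_⟩
    · obtain ⟨h, hh⟩ := hf
      exact ⟨h, fun i j hij => hh i j ((hL i j).1 hij)⟩
    · have hx : (f x.1).getLeft? = none := mem_forestRoots.1 x.2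
      cases hfx : f x.1 with
      | inl j => rw [hfx] at hx; simp at hx
      | inr y => rfl
    · apply Subtype.ext
      funext i
      show toAcyc n m _ i = f i
      rw [toAcyc]
      dsimp only
      split
      case isTrue hi =>
        have hR : (f i).isRight := by
          rcases hx : f i with j | y
          · rw [hx] at hi; simp at hi
          · rfl
        exact (Sum.eq_right_getRight_of_isRight hR).symm
      case isFalse hi =>
        have hLi : (f i).isLeft := by
          rcases hx : f i with j | y
          · rfl
          · rw [hx] at hi; exact absurd rfl hi
        obtain ⟨j, hx⟩ := Sum.isLeft_iff.1 hLi
        simp only [hx]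
        simp [Sum.getLeft?]

lemma forest_sum (n m : ℕ) (hn : 1 ≤ n) :
    ∑ k ∈ Finset.range (n + 1),
        (Nat.card {f₀ : Fin n → Option (Fin n) //
          IsForest n f₀ ∧ (forestRoots n f₀).card = k}) * m ^ k
      = m * (n + m) ^ (n - 1) := by
  have h1 : Nat.card {f : Fin n → Fin n ⊕ Fin m // Acyc f} = m * (n + m) ^ (n - 1) := by
    have := card_acyc n (Fin n) (Fin m) (Fintype.card_fin n)
    rw [if_neg (by omega)] at this
    simpa using this
  rw [← h1, Nat.card_congr (forestEquiv n m)]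
  letI : Fintype {f₀ : Fin n → Option (Fin n) // IsForest n f₀} := Fintype.ofFinite _
  rw [nat_card_sigma]
  have h2 : ∀ p : {f₀ : Fin n → Option (Fin n) // IsForest n f₀},
      Nat.card (↥(forestRoots n p.1) → Fin m) = m ^ (forestRoots n p.1).card := by
    intro p
    rw [Nat.card_fun, Nat.card_eq_fintype_card (α := ↥(forestRoots n p.1)),
      Nat.card_eq_fintype_card (α := Fin m), Fintype.card_coe, Fintype.card_fin]
  rw [Finset.sum_congr rfl (fun p _ => h2 p)]
  have hmaps : ∀ p : {f₀ : Fin n → Option (Fin n) // IsForest n f₀}, p ∈ Finset.univ →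
      (forestRoots n p.1).card ∈ Finset.range (n + 1) := by
    intro p _
    rw [Finset.mem_range]
    have := Finset.card_le_univ (forestRoots n p.1)
    simp only [Finset.card_univ, Fintype.card_fin] at this
    omega
  rw [← Finset.sum_fiberwise_of_maps_to hmaps (fun p => m ^ (forestRoots n p.1).card)]
  refine Finset.sum_congr rfl fun k hk => ?_
  have h3 : ∀ p ∈ Finset.univ.filter
      (fun p : {f₀ : Fin n → Option (Fin n) // IsForest n f₀} =>
        (forestRoots n p.1).card = k),
      m ^ (forestRoots n p.1).card = m ^ k := by
    intro p hp
    rw [(Finset.mem_filter.1 hp).2]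
  rw [Finset.sum_congr rfl h3, Finset.sum_const, smul_eq_mul]
  congr 1
  rw [← Fintype.card_subtype]
  rw [Nat.card_congr (Equiv.subtypeSubtypeEquivSubtypeInter
    (fun f₀ : Fin n → Option (Fin n) => IsForest n f₀)
    (fun f₀ => (forestRoots n f₀).card = k)).symm]
  rw [Nat.card_eq_fintype_card]

/-- The number of labeled rooted forests on `n` vertices with exactly `k` roots is
`C(n-1, k-1) · n^(n-k)`. -/
theorem count_forests (n k : ℕ) (hn : 1 ≤ n) (hk : 1 ≤ k) :
    Nat.card {f : Fin n → Option (Fin n) //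
        IsForest n f ∧ (forestRoots n f).card = k} =
      Nat.choose (n - 1) (k - 1) * n ^ (n - k) := by
  by_cases hkn : k ≤ n
  · set F : ℕ → ℕ := fun j => Nat.card {f : Fin n → Option (Fin n) //
        IsForest n f ∧ (forestRoots n f).card = j} with hF
    show F k = _
    set p : Polynomial ℤ := ∑ j ∈ Finset.range (n + 1),
      Polynomial.C ((F j : ℤ)) * Polynomial.X ^ j with hp
    set q : Polynomial ℤ := Polynomial.X * (Polynomial.X + Polynomial.C (n : ℤ)) ^ (n - 1)
      with hq
    have heval : ∀ m : ℕ, p.eval (m : ℤ) = q.eval (m : ℤ) := by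
      intro m
      have h1 := forest_sum n m hn
      rw [hp, hq]
      simp only [Polynomial.eval_finset_sum, Polynomial.eval_mul, Polynomial.eval_C,
        Polynomial.eval_pow, Polynomial.eval_X, Polynomial.eval_add]
      have h2 : ((∑ j ∈ Finset.range (n + 1), F j * m ^ j : ℕ) : ℤ)
          = ((m * (n + m) ^ (n - 1) : ℕ) : ℤ) := by rw [h1]
      push_cast at h2
      rw [h2, add_comm (n:ℤ) (m:ℤ)]
    have hinf : {x : ℤ | p.eval x = q.eval x}.Infinite := by
      apply Set.infinite_of_injective_forall_mem (f := (Nat.cast : ℕ → ℤ))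
        Nat.cast_injective
      intro a
      exact heval a
    have hpq : p = q := Polynomial.eq_of_infinite_eval_eq p q hinf
    have hcp : p.coeff k = (F k : ℤ) := by
      rw [hp, Polynomial.finset_sum_coeff]
      simp only [Polynomial.coeff_C_mul, Polynomial.coeff_X_pow, mul_ite, mul_one, mul_zero]
      rw [Finset.sum_ite_eq (Finset.range (n + 1)) k (fun j => (F j : ℤ))]
      rw [if_pos (Finset.mem_range.2 (by omega))]
    have hcq : q.coeff k = (n : ℤ) ^ (n - k) * ((n - 1).choose (k - 1) : ℤ) := by
      obtain ⟨k', rfl⟩ : ∃ k', k = k' + 1 := ⟨k - 1, by omega⟩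
      rw [hq, Polynomial.coeff_X_mul, Polynomial.coeff_X_add_C_pow]
      have e1 : n - 1 - k' = n - (k' + 1) := by omega
      have e2 : k' + 1 - 1 = k' := by omega
      rw [e1, e2]
    have : (F k : ℤ) = (n : ℤ) ^ (n - k) * ((n - 1).choose (k - 1) : ℤ) := by
      rw [← hcp, hpq, hcq]
    have hfin : F k = n ^ (n - k) * (n - 1).choose (k - 1) := by exact_mod_cast this
    rw [hfin, mul_comm]
  · have hE : IsEmpty {f : Fin n → Option (Fin n) //
        IsForest n f ∧ (forestRoots n f).card = k} := by
      constructor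
      rintro ⟨f, -, hcard⟩
      have := Finset.card_le_univ (forestRoots n f)
      simp only [Finset.card_univ, Fintype.card_fin] at this
      omega
    rw [Nat.card_of_isEmpty, Nat.choose_eq_zero_of_lt (by omega), zero_mul]
end

section
/- The number of nilpotent partial transformations on [n] equals (n+1)^{n−1}. -/
open Function Finset

namespace NilpCount

variable {n : ℕ}

/-- Extension of a partial map by `none ↦ none`. -/
def ext (f : Fin n → Option (Fin n)) : Option (Fin n) → Option (Fin n) :=
  fun y => y.bind f

lemma ext_none (f : Fin n → Option (Fin n)) : ext f none = none := rfl

lemma ext_some (f : Fin n → Option (Fin n)) (x : Fin n) : ext f (some x) = f x := rfl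

lemma iterate_none (f : Fin n → Option (Fin n)) (k : ℕ) : (ext f)^[k] none = none :=
  Function.iterate_fixed rfl k

lemma iterate_none_mono {f : Fin n → Option (Fin n)} {y : Option (Fin n)} {k l : ℕ}
    (h : (ext f)^[k] y = none) (hkl : k ≤ l) : (ext f)^[l] y = none := by
  have h2 : l = (l - k) + k := (Nat.sub_add_cancel hkl).symm
  rw [h2, Function.iterate_add_apply, h, iterate_none]

/-- Acyclicity: every point eventually reaches `none`. -/
def Acyclic (f : Fin n → Option (Fin n)) : Prop :=
  ∀ x : Option (Fin n), ∃ k, (ext f)^[k] x = none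

/-- Periodic point of the extension. -/
def PerPt (h : Fin n → Option (Fin n)) (y : Option (Fin n)) : Prop :=
  ∃ p, 0 < p ∧ (ext h)^[p] y = y

lemma perPt_none (h : Fin n → Option (Fin n)) : PerPt h none :=
  ⟨1, Nat.one_pos, rfl⟩

lemma iterate_mul_self {h : Fin n → Option (Fin n)} {y : Option (Fin n)} {p : ℕ}
    (hp : (ext h)^[p] y = y) (s : ℕ) : (ext h)^[p * s] y = y := by
  induction s with
  | zero => simp
  | succ s ih => rw [Nat.mul_succ, Function.iterate_add_apply, hp, ih]

lemma PerPt.eq_none {h : Fin n → Option (Fin n)} {y : Option (Fin n)} {k : ℕ}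
    (hy : PerPt h y) (hk : (ext h)^[k] y = none) : y = none := by
  obtain ⟨p, hp, hyp⟩ := hy
  have h1 : k ≤ p * k := Nat.le_mul_of_pos_left k hp
  have h2 : (ext h)^[p * k] y = none := iterate_none_mono hk h1
  rw [iterate_mul_self hyp k] at h2
  exact h2

lemma PerPt.apply {h : Fin n → Option (Fin n)} {y : Option (Fin n)} (hy : PerPt h y) :
    PerPt h (ext h y) := by
  obtain ⟨p, hp, hyp⟩ := hy
  exact ⟨p, hp, by rw [← Function.iterate_succ_apply, Function.iterate_succ_apply', hyp]⟩

lemma exists_iterate_perPt (h : Fin n → Option (Fin n)) (y : Option (Fin n)) :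
    ∃ k, PerPt h ((ext h)^[k] y) := by
  obtain ⟨i, j, hij, heq⟩ := Finite.exists_ne_map_eq_of_infinite (fun k : ℕ => (ext h)^[k] y)
  rcases hij.lt_or_gt with hlt | hlt
  · exact ⟨i, ⟨j - i, by omega, by
      rw [← Function.iterate_add_apply, Nat.sub_add_cancel hlt.le]; exact heq.symm⟩⟩
  · exact ⟨j, ⟨i - j, by omega, by
      rw [← Function.iterate_add_apply, Nat.sub_add_cancel hlt.le]; exact heq⟩⟩

lemma perPt_inj {h : Fin n → Option (Fin n)} {y z : Option (Fin n)}
    (hy : PerPt h y) (hz : PerPt h z) (he : ext h y = ext h z) : y = z := by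
  obtain ⟨p, hp, hyp⟩ := hy
  obtain ⟨q, hq, hzq⟩ := hz
  have hy2 : (ext h)^[p * q] y = y := iterate_mul_self hyp q
  have hz2 : (ext h)^[p * q] z = z := by rw [mul_comm]; exact iterate_mul_self hzq p
  have hpq : p * q = (p * q - 1) + 1 := by
    have : 0 < p * q := Nat.mul_pos hp hq
    omega
  rw [hpq, Function.iterate_succ_apply] at hy2 hz2
  rw [← hy2, ← hz2, he]


open scoped Classical in
/-- The set of periodic points in `Fin n`. -/
noncomputable def perSet (h : Fin n → Option (Fin n)) : Finset (Fin n) :=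
  Finset.univ.filter (fun x => PerPt h (some x))

lemma mem_perSet {h : Fin n → Option (Fin n)} {x : Fin n} :
    x ∈ perSet h ↔ PerPt h (some x) := by simp [perSet]

lemma perSet_maps {h : Fin n → Option (Fin n)} {x : Fin n} (hx : x ∈ perSet h) :
    ∃ x', h x = some x' ∧ x' ∈ perSet h := by
  rw [mem_perSet] at hx
  have h1 : PerPt h (h x) := by have := hx.apply; rwa [ext_some] at this
  have h2 : h x ≠ none := by
    intro hn
    have h3 : (ext h)^[1] (some x) = none := by simpa [ext_some] using hn
    simpa using hx.eq_none h3
  obtain ⟨x', hx'⟩ := Option.ne_none_iff_exists'.mp h2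
  exact ⟨x', hx', mem_perSet.mpr (hx' ▸ h1)⟩

lemma perSet_inj {h : Fin n → Option (Fin n)} {x y : Fin n}
    (hx : x ∈ perSet h) (hy : y ∈ perSet h) (he : h x = h y) : x = y := by
  have := perPt_inj (mem_perSet.mp hx) (mem_perSet.mp hy)
    (by rw [ext_some, ext_some, he])
  exact Option.some_injective _ this

/-- The sorted enumeration of the periodic set. -/
noncomputable def perEnum (h : Fin n → Option (Fin n)) :
    Fin (perSet h).card ≃o {x // x ∈ perSet h} :=
  (perSet h).orderIsoOfFin rfl

lemma perWord_inj {h : Fin n → Option (Fin n)} {i j : Fin (perSet h).card}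
    (he : h (perEnum h i) = h (perEnum h j)) : i = j := by
  have h1 : (perEnum h i : Fin n) = (perEnum h j : Fin n) :=
    perSet_inj (perEnum h i).2 (perEnum h j).2 he
  exact (perEnum h).toEquiv.injective (Subtype.coe_injective h1)

lemma mem_perSet_iff_word {h : Fin n → Option (Fin n)} {x : Fin n} :
    x ∈ perSet h ↔ ∃ i : Fin (perSet h).card, h (perEnum h i) = some x := by
  constructor
  · intro hx
    -- surjectivity of the step map on perSet
    have hstep : ∀ c : {x // x ∈ perSet h}, ∃ c' : {x // x ∈ perSet h}, h c = some c' := by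
      intro c
      obtain ⟨x', hx', hmem⟩ := perSet_maps c.2
      exact ⟨⟨x', hmem⟩, hx'⟩
    choose F hF using hstep
    have hFinj : Function.Injective F := by
      intro a b hab
      have : h a = h b := by rw [hF a, hF b, hab]
      exact Subtype.coe_injective (perSet_inj a.2 b.2 this)
    have hFsurj : Function.Surjective F := Finite.surjective_of_injective hFinj
    obtain ⟨c, hc⟩ := hFsurj ⟨x, hx⟩
    refine ⟨(perEnum h).symm c, ?_⟩
    rw [OrderIso.apply_symm_apply]
    rw [hF c, hc]; rfl
  · rintro ⟨i, hi⟩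
    obtain ⟨x', hx', hmem⟩ := perSet_maps (perEnum h i).2
    rw [hi] at hx'
    obtain rfl : x = x' := by injection hx'
    exact hmem

open scoped Classical in
/-- Exit time: least `k` with `(ext g)^[k] m = none`. -/
noncomputable def exitTime (g : Fin n → Option (Fin n)) (m : Option (Fin n)) : ℕ :=
  if hg : ∃ k, (ext g)^[k] m = none then Nat.find hg else 0

lemma exitTime_spec {g : Fin n → Option (Fin n)} {m : Option (Fin n)}
    (hg : ∃ k, (ext g)^[k] m = none) : (ext g)^[exitTime g m] m = none := by
  rw [exitTime, dif_pos hg]; exact Nat.find_spec hg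

lemma exitTime_min {g : Fin n → Option (Fin n)} {m : Option (Fin n)} {i : ℕ}
    (hi : i < exitTime g m) : (ext g)^[i] m ≠ none := by
  rw [exitTime] at hi
  split_ifs at hi with hg
  · exact Nat.find_min hg hi
  · omega

lemma path_inj {g : Fin n → Option (Fin n)} {m : Option (Fin n)} {i j : ℕ}
    (hi : i < exitTime g m) (hj : j < exitTime g m)
    (he : (ext g)^[i] m = (ext g)^[j] m) : i = j := by
  have key : ∀ a b : ℕ, a < b → b < exitTime g m → (ext g)^[a] m = (ext g)^[b] m → False := by
    intro a b hab hbt heq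
    have hshift : ∀ s : ℕ, (ext g)^[a + (b - a) * s] m = (ext g)^[a] m := by
      intro s
      induction s with
      | zero => simp
      | succ s ih =>
        have h1 : a + (b - a) * (s + 1) = (b - a) + (a + (b - a) * s) := by ring
        rw [h1, Function.iterate_add_apply, ih, ← Function.iterate_add_apply,
          Nat.sub_add_cancel hab.le, ← heq]
    have hex : ∃ k, (ext g)^[k] m = none := by
      by_contra hno
      push_neg at hno
      have : exitTime g m = 0 := by rw [exitTime, dif_neg (by push_neg; exact hno)]
      omega
    set t := exitTime g m with ht
    have hbig : t ≤ a + (b - a) * t := by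
      have : 1 ≤ b - a := by omega
      calc t ≤ (b - a) * t := Nat.le_mul_of_pos_left t (by omega)
        _ ≤ a + (b - a) * t := by omega
    have h2 : (ext g)^[a + (b - a) * t] m = none :=
      iterate_none_mono (exitTime_spec hex) hbig
    rw [hshift t] at h2
    exact exitTime_min (by omega : a < t) h2
  rcases Nat.lt_trichotomy i j with h | h | h
  · exact absurd (key i j h hj he) id
  · exact h
  · exact absurd (key j i h hi he.symm) id

open scoped Classical in
/-- The set of points on the path from `m` to `none`. -/
noncomputable def pathSet (g : Fin n → Option (Fin n)) (m : Option (Fin n)) : Finset (Fin n) :=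
  Finset.univ.filter (fun x => ∃ i, i < exitTime g m ∧ (ext g)^[i] m = some x)

lemma mem_pathSet {g : Fin n → Option (Fin n)} {m : Option (Fin n)} {x : Fin n} :
    x ∈ pathSet g m ↔ ∃ i, i < exitTime g m ∧ (ext g)^[i] m = some x := by simp [pathSet]

lemma pathSet_card {g : Fin n → Option (Fin n)} {m : Option (Fin n)} :
    (pathSet g m).card = exitTime g m := by
  apply Finset.card_eq_of_bijective
    (f := fun i hi => ((ext g)^[i] m).get (Option.ne_none_iff_isSome.mp (exitTime_min hi)))
  · intro a ha
    obtain ⟨i, hi, hia⟩ := mem_pathSet.mp ha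
    refine ⟨i, hi, ?_⟩
    apply Option.some_injective
    rw [Option.some_get, hia]
  · intro i hi
    rw [mem_pathSet]
    exact ⟨i, hi, (Option.some_get _).symm⟩
  · intro i j hi hj hij
    apply path_inj hi hj
    rw [← Option.some_get (Option.ne_none_iff_isSome.mp (exitTime_min hi)),
      ← Option.some_get (Option.ne_none_iff_isSome.mp (exitTime_min hj)), hij]


/-- The sorted enumeration of the path set. -/
noncomputable def pathEnum (g : Fin n → Option (Fin n)) (m : Option (Fin n)) :
    Fin (exitTime g m) ≃o {x // x ∈ pathSet g m} :=
  (pathSet g m).orderIsoOfFin pathSet_card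

open scoped Classical in
/-- Joyal map: from (acyclic map, marked point) to an arbitrary map. -/
noncomputable def mkFun (g : Fin n → Option (Fin n)) (m : Option (Fin n)) :
    Fin n → Option (Fin n) :=
  fun x => if hx : x ∈ pathSet g m then
    (ext g)^[((pathEnum g m).symm ⟨x, hx⟩ : Fin (exitTime g m))] m
  else g x

lemma mkFun_apply_mem {g : Fin n → Option (Fin n)} {m : Option (Fin n)}
    (i : Fin (exitTime g m)) :
    mkFun g m (pathEnum g m i) = (ext g)^[(i : ℕ)] m := by
  have hmem : (pathEnum g m i : Fin n) ∈ pathSet g m := (pathEnum g m i).2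
  rw [mkFun, dif_pos hmem]
  congr 2
  have : (⟨(pathEnum g m i : Fin n), hmem⟩ : {x // x ∈ pathSet g m}) = pathEnum g m i := rfl
  rw [this, OrderIso.symm_apply_apply]

lemma mkFun_apply_notMem {g : Fin n → Option (Fin n)} {m : Option (Fin n)} {x : Fin n}
    (hx : x ∉ pathSet g m) : mkFun g m x = g x := by
  rw [mkFun, dif_neg hx]

lemma mkFun_maps {g : Fin n → Option (Fin n)} {m : Option (Fin n)} {x : Fin n}
    (hx : x ∈ pathSet g m) :
    ∃ x', mkFun g m x = some x' ∧ x' ∈ pathSet g m := by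
  have h1 : mkFun g m x = (ext g)^[((pathEnum g m).symm ⟨x, hx⟩ : Fin (exitTime g m))] m := by
    rw [mkFun, dif_pos hx]
  set i := ((pathEnum g m).symm ⟨x, hx⟩ : Fin (exitTime g m)) with hi
  have h2 : (ext g)^[(i : ℕ)] m ≠ none := exitTime_min i.isLt
  obtain ⟨x', hx'⟩ := Option.ne_none_iff_exists'.mp h2
  exact ⟨x', by rw [h1, hx'], mem_pathSet.mpr ⟨i, i.isLt, hx'⟩⟩

lemma mkFun_inj {g : Fin n → Option (Fin n)} {m : Option (Fin n)} {x y : Fin n}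
    (hx : x ∈ pathSet g m) (hy : y ∈ pathSet g m)
    (he : mkFun g m x = mkFun g m y) : x = y := by
  simp only [mkFun] at he
  rw [dif_pos hx, dif_pos hy] at he
  have h1 := path_inj ((pathEnum g m).symm ⟨x, hx⟩).isLt ((pathEnum g m).symm ⟨y, hy⟩).isLt he
  have h2 : (pathEnum g m).symm ⟨x, hx⟩ = (pathEnum g m).symm ⟨y, hy⟩ := Fin.ext h1
  have h3 := congrArg (pathEnum g m) h2
  rw [OrderIso.apply_symm_apply, OrderIso.apply_symm_apply] at h3
  injection h3 with h4

/-- Generic: a point in a finite set closed under an injective restriction is periodic. -/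
lemma perPt_of_closed_inj {h : Fin n → Option (Fin n)} {S : Finset (Fin n)}
    (hmaps : ∀ x ∈ S, ∃ x', h x = some x' ∧ x' ∈ S)
    (hinj : ∀ x ∈ S, ∀ y ∈ S, h x = h y → x = y)
    {x : Fin n} (hx : x ∈ S) : PerPt h (some x) := by
  have hclosed : ∀ k, ∃ b ∈ S, (ext h)^[k] (some x) = some b := by
    intro k
    induction k with
    | zero => exact ⟨x, hx, rfl⟩
    | succ k ih =>
      obtain ⟨b, hb, hbk⟩ := ih
      obtain ⟨b', hb', hmem⟩ := hmaps b hb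
      exact ⟨b', hmem, by rw [Function.iterate_succ_apply', hbk, ext_some, hb']⟩
  have hcancel : ∀ i j : ℕ, i ≤ j →
      (ext h)^[i] (some x) = (ext h)^[j] (some x) → some x = (ext h)^[j - i] (some x) := by
    intro i
    induction i with
    | zero => intro j _ he; simpa using he
    | succ i ih =>
      intro j hij he
      obtain ⟨j', rfl⟩ : ∃ j', j = j' + 1 := ⟨j - 1, by omega⟩
      rw [Function.iterate_succ_apply', Function.iterate_succ_apply'] at he
      obtain ⟨b, hb, hbk⟩ := hclosed i
      obtain ⟨c, hc, hck⟩ := hclosed j'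
      rw [hbk, hck, ext_some, ext_some] at he
      have : b = c := hinj b hb c hc he
      have h5 : (ext h)^[i] (some x) = (ext h)^[j'] (some x) := by rw [hbk, hck, this]
      have := ih j' (by omega) h5
      simpa using this
  obtain ⟨i, j, hij, heq⟩ := Finite.exists_ne_map_eq_of_infinite
    (fun k : ℕ => (ext h)^[k] (some x))
  rcases hij.lt_or_gt with hlt | hlt
  · exact ⟨j - i, by omega, (hcancel i j hlt.le heq).symm⟩
  · exact ⟨i - j, by omega, (hcancel j i hlt.le heq.symm).symm⟩

/-- Key lemma: the periodic set of `mkFun g m` is exactly the path set. -/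
lemma perSet_mkFun {g : Fin n → Option (Fin n)} (hg : Acyclic g) (m : Option (Fin n)) :
    perSet (mkFun g m) = pathSet g m := by
  set h := mkFun g m with hh
  apply Finset.ext
  intro x
  constructor
  · intro hx
    obtain ⟨p, hp, hper⟩ := mem_perSet.mp hx
    by_cases hc : ∃ j, ∃ b ∈ pathSet g m, (ext h)^[j] (some x) = some b
    · obtain ⟨j, b, hb, hjb⟩ := hc
      -- iterates of some b stay in the path set
      have hstay : ∀ k, ∃ b' ∈ pathSet g m, (ext h)^[k] (some b) = some b' := by
        intro k
        induction k with
        | zero => exact ⟨b, hb, rfl⟩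
        | succ k ih =>
          obtain ⟨b', hb', hbk⟩ := ih
          obtain ⟨b'', hb''1, hb''2⟩ := mkFun_maps hb'
          exact ⟨b'', hb''2, by
            rw [Function.iterate_succ_apply', hbk, ext_some]; exact hb''1⟩
      have h1 : (ext h)^[p * j] (some x) = some x := iterate_mul_self hper j
      have h2 : p * j = (p * j - j) + j := by
        have : j ≤ p * j := Nat.le_mul_of_pos_left j hp
        omega
      obtain ⟨b', hb', hbk⟩ := hstay (p * j - j)
      rw [h2, Function.iterate_add_apply, hjb, hbk] at h1
      obtain rfl : b' = x := by injection h1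
      exact hb'
    · push_neg at hc
      exfalso
      -- off the path set, h agrees with g, so x would be g-periodic
      have hagree : ∀ k, (ext h)^[k] (some x) = (ext g)^[k] (some x) := by
        intro k
        induction k with
        | zero => rfl
        | succ k ih =>
          have hz : (ext h)^[k] (some x) ≠ none := by
            intro hz0
            have := PerPt.eq_none ⟨p, hp, hper⟩ hz0
            simp at this
          obtain ⟨b, hbz⟩ := Option.ne_none_iff_exists'.mp hz
          have hbnot : b ∉ pathSet g m := by
            intro hbmem
            exact hc k b hbmem hbz
          rw [Function.iterate_succ_apply', Function.iterate_succ_apply', hbz, ext_some,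
            ← ih, hbz, ext_some]
          exact mkFun_apply_notMem hbnot
      obtain ⟨k, hk⟩ := hg (some x)
      have h1 : (ext g)^[p * k] (some x) = some x := by
        rw [← hagree]; exact iterate_mul_self hper k
      have h2 : (ext g)^[p * k] (some x) = none :=
        iterate_none_mono hk (Nat.le_mul_of_pos_left k hp)
      rw [h1] at h2
      exact Option.some_ne_none x h2
  · intro hx
    exact mem_perSet.mpr (perPt_of_closed_inj (fun a ha => mkFun_maps ha)
      (fun a ha b hb => mkFun_inj ha hb) hx)


lemma orderIsoOfFin_congr {γ : Type*} [LinearOrder γ] {s s' : Finset γ} (hss : s = s')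
    {k k' : ℕ} (hc : s.card = k) (hc' : s'.card = k') {i : Fin k} {i' : Fin k'}
    (hii : (i : ℕ) = (i' : ℕ)) :
    (s.orderIsoOfFin hc i : γ) = (s'.orderIsoOfFin hc' i' : γ) := by
  subst hss
  subst hc
  subst hc'
  obtain rfl : i = i' := Fin.ext hii
  rfl

open scoped Classical in
/-- Joyal inverse: the marked point. -/
noncomputable def mark (h : Fin n → Option (Fin n)) : Option (Fin n) :=
  if ht : 0 < (perSet h).card then h (perEnum h ⟨0, ht⟩) else none

open scoped Classical in
/-- Joyal inverse: the acyclic map. -/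
noncomputable def mkG (h : Fin n → Option (Fin n)) : Fin n → Option (Fin n) :=
  fun x =>
    if hx : ∃ i : Fin (perSet h).card, h (perEnum h i) = some x then
      (if h2 : (hx.choose : ℕ) + 1 < (perSet h).card then
        h (perEnum h ⟨(hx.choose : ℕ) + 1, h2⟩) else none)
    else h x

lemma mkG_notMem {h : Fin n → Option (Fin n)} {x : Fin n} (hx : x ∉ perSet h) :
    mkG h x = h x := by
  rw [mkG, dif_neg]
  intro hex
  exact hx (mem_perSet_iff_word.mpr hex)

lemma mkG_word {h : Fin n → Option (Fin n)} {x : Fin n} {i : Fin (perSet h).card}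
    (hi : h (perEnum h i) = some x) :
    mkG h x = if h2 : (i : ℕ) + 1 < (perSet h).card then
      h (perEnum h ⟨(i : ℕ) + 1, h2⟩) else none := by
  have hx : ∃ j : Fin (perSet h).card, h (perEnum h j) = some x := ⟨i, hi⟩
  rw [mkG, dif_pos hx]
  have hco : hx.choose = i := perWord_inj (by rw [hx.choose_spec, hi])
  simp only [hco]

lemma mkG_iterate_mark (h : Fin n → Option (Fin n)) :
    ∀ i, i ≤ (perSet h).card → (ext (mkG h))^[i] (mark h) =
      if hi : i < (perSet h).card then h (perEnum h ⟨i, hi⟩) else none := by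
  intro i
  induction i with
  | zero =>
    intro _
    simp only [Function.iterate_zero, id_eq, mark]
  | succ i ih =>
    intro hi1
    have hi : i < (perSet h).card := by omega
    rw [Function.iterate_succ_apply', ih (by omega), dif_pos hi]
    obtain ⟨x, hx, hmem⟩ := perSet_maps (perEnum h ⟨i, hi⟩).2
    rw [hx, ext_some, mkG_word hx]

lemma mkG_iterate_lt {h : Fin n → Option (Fin n)} {i : ℕ} (hi : i < (perSet h).card) :
    (ext (mkG h))^[i] (mark h) = h (perEnum h ⟨i, hi⟩) := by
  rw [mkG_iterate_mark h i hi.le, dif_pos hi]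

lemma mkG_exit (h : Fin n → Option (Fin n)) :
    (ext (mkG h))^[(perSet h).card] (mark h) = none := by
  rw [mkG_iterate_mark h _ le_rfl, dif_neg (lt_irrefl _)]

lemma perSet_reaches_none {h : Fin n → Option (Fin n)} {x : Fin n} (hx : x ∈ perSet h) :
    ∃ k, (ext (mkG h))^[k] (some x) = none := by
  obtain ⟨i, hi⟩ := mem_perSet_iff_word.mp hx
  refine ⟨(perSet h).card - (i : ℕ), ?_⟩
  rw [← hi, ← mkG_iterate_lt i.isLt, ← Function.iterate_add_apply,
    Nat.sub_add_cancel i.isLt.le]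
  exact mkG_exit h

lemma mkG_acyclic (h : Fin n → Option (Fin n)) : Acyclic (mkG h) := by
  intro y
  have hex := exists_iterate_perPt h y
  classical
  set k := Nat.find hex with hk
  have hkspec : PerPt h ((ext h)^[k] y) := Nat.find_spec hex
  have hagree : ∀ i, i ≤ k → (ext (mkG h))^[i] y = (ext h)^[i] y := by
    intro i
    induction i with
    | zero => intro _; rfl
    | succ i ih =>
      intro hik
      have hnp : ¬ PerPt h ((ext h)^[i] y) := Nat.find_min hex (by omega)
      have hz : (ext h)^[i] y ≠ none := by
        intro h0
        exact hnp (h0 ▸ perPt_none h)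
      obtain ⟨b, hb⟩ := Option.ne_none_iff_exists'.mp hz
      have hbnot : b ∉ perSet h := fun hmem => hnp (hb ▸ mem_perSet.mp hmem)
      rw [Function.iterate_succ_apply', Function.iterate_succ_apply', ih (by omega), hb,
        ext_some, ext_some]
      exact mkG_notMem hbnot
  rcases hzc : (ext h)^[k] y with _ | x
  · exact ⟨k, by rw [hagree k le_rfl, hzc]⟩
  · have hxmem : x ∈ perSet h := mem_perSet.mpr (hzc ▸ hkspec)
    obtain ⟨l, hl⟩ := perSet_reaches_none hxmem
    refine ⟨l + k, ?_⟩
    rw [Function.iterate_add_apply, hagree k le_rfl, hzc, hl]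


lemma exitTime_mkG (h : Fin n → Option (Fin n)) :
    exitTime (mkG h) (mark h) = (perSet h).card := by
  classical
  have hex : ∃ k, (ext (mkG h))^[k] (mark h) = none := ⟨_, mkG_exit h⟩
  rw [exitTime, dif_pos hex, Nat.find_eq_iff]
  refine ⟨mkG_exit h, ?_⟩
  intro j hj hnone
  obtain ⟨x, hx, _⟩ := perSet_maps (perEnum h ⟨j, hj⟩).2
  rw [mkG_iterate_lt hj, hx] at hnone
  exact Option.some_ne_none _ hnone

lemma pathSet_mkG (h : Fin n → Option (Fin n)) :
    pathSet (mkG h) (mark h) = perSet h := by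
  ext x
  rw [mem_pathSet, mem_perSet_iff_word]
  constructor
  · rintro ⟨i, hi, hix⟩
    rw [exitTime_mkG] at hi
    exact ⟨⟨i, hi⟩, by rw [← mkG_iterate_lt hi]; exact hix⟩
  · rintro ⟨i, hi⟩
    refine ⟨(i : ℕ), by rw [exitTime_mkG]; exact i.isLt, ?_⟩
    rw [mkG_iterate_lt i.isLt]
    exact hi

lemma mkFun_mkG (h : Fin n → Option (Fin n)) : mkFun (mkG h) (mark h) = h := by
  funext x
  by_cases hx : x ∈ perSet h
  · have hx' : x ∈ pathSet (mkG h) (mark h) := by rw [pathSet_mkG]; exact hx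
    simp only [mkFun]
    rw [dif_pos hx']
    set i := (pathEnum (mkG h) (mark h)).symm ⟨x, hx'⟩ with hidef
    have hilt : (i : ℕ) < (perSet h).card := by
      rw [← exitTime_mkG h]; exact i.isLt
    rw [mkG_iterate_lt hilt]
    have h1 : (perEnum h ⟨(i : ℕ), hilt⟩ : Fin n) = (pathEnum (mkG h) (mark h) i : Fin n) :=
      orderIsoOfFin_congr (pathSet_mkG h).symm _ _ rfl
    have h2 : (pathEnum (mkG h) (mark h) i : Fin n) = x := by
      rw [hidef, OrderIso.apply_symm_apply]
    rw [h1, h2]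
  · have hx' : x ∉ pathSet (mkG h) (mark h) := by rw [pathSet_mkG]; exact hx
    rw [mkFun_apply_notMem hx']
    exact mkG_notMem hx

lemma mark_mkFun {g : Fin n → Option (Fin n)} (hg : Acyclic g) (m : Option (Fin n)) :
    mark (mkFun g m) = m := by
  have hps : perSet (mkFun g m) = pathSet g m := perSet_mkFun hg m
  have hcard : (perSet (mkFun g m)).card = exitTime g m := by rw [hps, pathSet_card]
  rw [mark]
  split_ifs with ht
  · have h0lt : 0 < exitTime g m := by rw [← hcard]; exact ht
    have h1 : (perEnum (mkFun g m) ⟨0, ht⟩ : Fin n) = (pathEnum g m ⟨0, h0lt⟩ : Fin n) :=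
      orderIsoOfFin_congr hps _ _ rfl
    rw [h1, mkFun_apply_mem]
    rfl
  · have h0 : exitTime g m = 0 := by omega
    have := exitTime_spec (hg m)
    rw [h0] at this
    exact this.symm

lemma mkG_mkFun {g : Fin n → Option (Fin n)} (hg : Acyclic g) (m : Option (Fin n)) :
    mkG (mkFun g m) = g := by
  funext x
  have hps : perSet (mkFun g m) = pathSet g m := perSet_mkFun hg m
  have hcard : (perSet (mkFun g m)).card = exitTime g m := by rw [hps, pathSet_card]
  by_cases hx : x ∈ pathSet g m
  · obtain ⟨i0, hi0lt, hi0⟩ := mem_pathSet.mp hx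
    have hjlt : i0 < (perSet (mkFun g m)).card := by omega
    have hword : mkFun g m (perEnum (mkFun g m) ⟨i0, hjlt⟩) = some x := by
      have hcoe : (perEnum (mkFun g m) ⟨i0, hjlt⟩ : Fin n) =
          (pathEnum g m ⟨i0, hi0lt⟩ : Fin n) :=
        orderIsoOfFin_congr hps _ _ rfl
      rw [hcoe, mkFun_apply_mem]
      exact hi0
    rw [mkG_word hword]
    have hvv : ((⟨i0, hjlt⟩ : Fin ((perSet (mkFun g m)).card)) : ℕ) = i0 := rfl
    have hgx : g x = (ext g)^[i0 + 1] m := by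
      rw [Function.iterate_succ_apply', hi0, ext_some]
    split_ifs with h2
    · have hlt2 : i0 + 1 < exitTime g m := by omega
      have hcoe2 : (perEnum (mkFun g m) ⟨i0 + 1, h2⟩ : Fin n) =
          (pathEnum g m ⟨i0 + 1, hlt2⟩ : Fin n) :=
        orderIsoOfFin_congr hps _ _ rfl
      rw [hcoe2, mkFun_apply_mem]
      exact hgx.symm
    · have heq : i0 + 1 = exitTime g m := by omega
      rw [hgx, heq, exitTime_spec (hg m)]
  · have hx' : x ∉ perSet (mkFun g m) := by rw [hps]; exact hx
    rw [mkG_notMem hx', mkFun_apply_notMem hx]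

/-- The Joyal-style equivalence. -/
noncomputable def mainEquiv (n : ℕ) :
    (Fin n → Option (Fin n)) ≃ {g : Fin n → Option (Fin n) // Acyclic g} × Option (Fin n) where
  toFun h := (⟨mkG h, mkG_acyclic h⟩, mark h)
  invFun p := mkFun p.1.1 p.2
  left_inv h := mkFun_mkG h
  right_inv p := by
    obtain ⟨⟨g, hg⟩, m⟩ := p
    simp only [Prod.mk.injEq, Subtype.mk.injEq]
    exact ⟨mkG_mkFun hg m, mark_mkFun hg m⟩

end NilpCount

/-- The number of nilpotent partial transformations on `[n]` equals `(n+1)^(n-1)`.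
A partial transformation is encoded as `f : Fin n → Option (Fin n)`, extended by zero
to `Option (Fin n)` via `bind`; it is nilpotent iff some iterate of the extension is
constantly `none`. -/
theorem count_nilpotent_partial_transformations (n : ℕ) :
    Nat.card {f : Fin n → Option (Fin n) //
        ∃ m : ℕ, ∀ x : Option (Fin n), (fun y : Option (Fin n) => y.bind f)^[m] x = none} =
      (n + 1) ^ (n - 1) := by
  classical
  have hiff : ∀ f : Fin n → Option (Fin n),
      (∃ m : ℕ, ∀ x : Option (Fin n), (fun y : Option (Fin n) => y.bind f)^[m] x = none) ↔
        NilpCount.Acyclic f := by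
    intro f
    constructor
    · rintro ⟨m, hm⟩ x
      exact ⟨m, hm x⟩
    · intro hf
      choose k hk using hf
      refine ⟨∑ x : Option (Fin n), k x, fun x => ?_⟩
      exact NilpCount.iterate_none_mono (hk x)
        (Finset.single_le_sum (fun _ _ => Nat.zero_le _) (Finset.mem_univ x))
  have e1 : {f : Fin n → Option (Fin n) //
      ∃ m : ℕ, ∀ x : Option (Fin n), (fun y : Option (Fin n) => y.bind f)^[m] x = none} ≃
      {f : Fin n → Option (Fin n) // NilpCount.Acyclic f} := Equiv.subtypeEquivRight hiff
  have hcardfun : Nat.card (Fin n → Option (Fin n)) = (n + 1) ^ n := by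
    simp [Nat.card_eq_fintype_card, Fintype.card_fun]
  have h2 : Nat.card {f : Fin n → Option (Fin n) // NilpCount.Acyclic f} * (n + 1) =
      (n + 1) ^ n := by
    have h3 := Nat.card_congr (NilpCount.mainEquiv n)
    rw [Nat.card_prod, hcardfun] at h3
    have h4 : Nat.card (Option (Fin n)) = n + 1 := by
      simp [Nat.card_eq_fintype_card]
    rw [h4] at h3
    exact h3.symm
  rw [Nat.card_congr e1]
  rcases n with _ | k
  · simpa using h2
  · have h5 : Nat.card {f : Fin (k + 1) → Option (Fin (k + 1)) // NilpCount.Acyclic f} *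
        (k + 1 + 1) = (k + 1 + 1) ^ k * (k + 1 + 1) := by
      rw [h2, pow_succ]
    have h6 := Nat.eq_of_mul_eq_mul_right (by omega : 0 < k + 1 + 1) h5
    simpa using h6
end
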